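/- arXiv:0809.4858 — 3 statements merged into one kernel-verified Lean document; each statement's English description precedes it below -/
import Mathlib

section
/- Let $K$ be a real symmetric $(2n)\times(2n)$ matrix, $j$ a positive integer, and define the $(4n)\times(4n)$ symmetric matrix $Q_j(K) = \frac{1}{1+j^2}\begin{pmatrix} -K & jJ^t \\ jJ & -K \end{pmatrix}$, where $J = \begin{pmatrix} 0 & -I_n \\ I_n & 0 \end{pmatrix}$. Then every eigenvalue of $Q_j(K)$ has even (geometric, equivalently algebraic) multiplicity. -/
/-!
Since `Jᵀ = -J`, the matrix `Q_j(K)` has the block shape `[[A, B], [-B, A]]`, so it commutes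
with `M = [[0, -1], [1, 0]]`. As `M² = -1`, `M` restricts to a complex structure on every
eigenspace of `Q_j(K)`, and a real vector space with a complex structure has even dimension.
-/

open Matrix Module

section ComplexStructure

variable {𝕜 V : Type*} [Field 𝕜] [LinearOrder 𝕜] [IsStrictOrderedRing 𝕜]
  [AddCommGroup V] [Module 𝕜 V] [FiniteDimensional 𝕜 V]

/-- `det f ^ 2 = det (-1) = (-1) ^ dim V`, and a square in an ordered field is not `-1`. -/
theorem Module.End.even_finrank_of_mul_self_eq_neg_one {f : End 𝕜 V} (hf : f * f = -1) :
    Even (finrank 𝕜 V) := by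
  have hdet : LinearMap.det f ^ 2 = (-1) ^ finrank 𝕜 V := by
    rw [sq, ← map_mul, hf, ← neg_one_smul 𝕜 (1 : End 𝕜 V), LinearMap.det_smul, map_one, mul_one]
  rcases Nat.even_or_odd (finrank 𝕜 V) with h | h
  · exact h
  · rw [h.neg_one_pow] at hdet
    nlinarith [sq_nonneg (LinearMap.det f)]

theorem Module.End.even_finrank_ker_of_commute {f g : End 𝕜 V} (hf : f * f = -1)
    (hfg : Commute f g) : Even (finrank 𝕜 (LinearMap.ker g)) := by
  have hmaps : ∀ x ∈ LinearMap.ker g, f x ∈ LinearMap.ker g := fun x hx => by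
    rw [LinearMap.mem_ker] at hx ⊢
    rw [← Module.End.mul_apply, ← hfg.eq, Module.End.mul_apply, hx, map_zero]
  exact Module.End.even_finrank_of_mul_self_eq_neg_one (f := f.restrict hmaps)
    (LinearMap.ext fun x => Subtype.ext (LinearMap.congr_fun hf x))

end ComplexStructure

namespace Matrix

variable {n α : Type*} [Fintype n] [DecidableEq n] [Ring α]

theorem fromBlocks_zero_neg_one_one_zero_mul_self :
    (fromBlocks 0 (-1) 1 0 : Matrix (n ⊕ n) (n ⊕ n) α) * fromBlocks 0 (-1) 1 0 = -1 := by
  simp [fromBlocks_multiply, ← fromBlocks_one, fromBlocks_neg]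

theorem commute_fromBlocks_zero_neg_one_one_zero (A B : Matrix n n α) :
    Commute (fromBlocks 0 (-1) 1 0) (fromBlocks A B (-B) A) := by
  simp [Commute, SemiconjBy, fromBlocks_multiply]

end Matrix

theorem eigenvalues_Qj_even_multiplicity_general (n : ℕ) (j : ℕ)
    (K : Matrix (Fin n ⊕ Fin n) (Fin n ⊕ Fin n) ℝ)
    (J : Matrix (Fin n ⊕ Fin n) (Fin n ⊕ Fin n) ℝ)
    (hJ : J = Matrix.fromBlocks 0 (-1) 1 0)
    (Q : Matrix ((Fin n ⊕ Fin n) ⊕ (Fin n ⊕ Fin n)) ((Fin n ⊕ Fin n) ⊕ (Fin n ⊕ Fin n)) ℝ)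
    (hQ : Q = ((1 + (j : ℝ) ^ 2)⁻¹) •
      Matrix.fromBlocks (-K) ((j : ℝ) • Jᵀ) ((j : ℝ) • J) (-K)) :
    ∀ μ : ℝ, Even (Module.finrank ℝ (LinearMap.ker (Matrix.toLin' (Q - μ • 1)))) := by
  intro μ
  have hJT : (j : ℝ) • J = -((j : ℝ) • Jᵀ) := by
    simp [hJ, fromBlocks_transpose, fromBlocks_smul, fromBlocks_neg]
  have hcomm : Commute (fromBlocks 0 (-1) 1 0) (Q - μ • 1) := by
    rw [hQ, hJT]
    exact ((commute_fromBlocks_zero_neg_one_one_zero _ _).smul_right _).sub_right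
      ((Commute.one_right _).smul_right μ)
  refine Module.End.even_finrank_ker_of_commute (f := toLin' (fromBlocks 0 (-1) 1 0)) ?_
    (hcomm.map toLinAlgEquiv')
  rw [Module.End.mul_eq_comp, ← toLin'_mul, fromBlocks_zero_neg_one_one_zero_mul_self, map_neg,
    toLin'_one, Module.End.one_eq_id]

/-- Every eigenvalue of `Q_j(K)` has even multiplicity. -/
theorem eigenvalues_Qj_even_multiplicity (n : ℕ) (j : ℕ) (hj : 0 < j)
    (K : Matrix (Fin n ⊕ Fin n) (Fin n ⊕ Fin n) ℝ) (hK : K.IsSymm)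
    (J : Matrix (Fin n ⊕ Fin n) (Fin n ⊕ Fin n) ℝ)
    (hJ : J = Matrix.fromBlocks 0 (-1) 1 0)
    (Q : Matrix ((Fin n ⊕ Fin n) ⊕ (Fin n ⊕ Fin n)) ((Fin n ⊕ Fin n) ⊕ (Fin n ⊕ Fin n)) ℝ)
    (hQ : Q = ((1 + (j : ℝ) ^ 2)⁻¹) •
      Matrix.fromBlocks (-K) ((j : ℝ) • Jᵀ) ((j : ℝ) • J) (-K)) :
    ∀ μ : ℝ, Even (Module.finrank ℝ (LinearMap.ker (Matrix.toLin' (Q - μ • 1)))) :=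
  eigenvalues_Qj_even_multiplicity_general n j K J hJ Q hQ
end

section
/- Let $H: \mathbb{R}^{2n} \times \mathbb{R}^k \to \mathbb{R}$ be continuous together with its first two partial derivatives in the first variable, fix $x_0 \in \mathbb{R}^{2n}$, and suppose $\nabla_x^2 H(x_0,\lambda) = \mathrm{diag}(A(\lambda), B(\lambda))$ with $A(\lambda), B(\lambda)$ symmetric $n\times n$ matrices. Fix $\lambda_0 \in \mathbb{R}^k$ and let $N(\lambda_0) = \lfloor \max\{\sqrt{\nu} : \nu \text{ a real positive eigenvalue of } A(\lambda_0)B(\lambda_0)\} \rfloor$ (with $N(\lambda_0)=0$ if there are no positive eigenvalues). Then there exists an open neighbourhood $U \subset \mathbb{R}^k$ of $\lambda_0$ such that $\det(A(\lambda)B(\lambda) - j^2 I) \neq 0$ for every integer $j > N(\lambda_0)$ and every $\lambda \in U$. -/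
/-!
Since `j² ≥ (N + 1)²` for `j > N`, it suffices to find a neighbourhood of `λ₀` on which the
spectrum of `A(λ)B(λ)` misses the closed half-line `[(N + 1)², ∞)`. At `λ₀` it does, because
every positive eigenvalue `ν` satisfies `√ν ≤ √(sup ν) < N + 1`. The spectrum is upper
semicontinuous: it is bounded by the norm, so only a compact piece of the half-line matters, and
on that piece the resolvent condition is open jointly in `(λ, μ)`; the tube lemma concludes.
-/

open Filter Topology Matrix

theorem spectrum.eventually_disjoint_of_continuousAt {X 𝕜 A : Type*} [TopologicalSpace X]
    [NontriviallyNormedField 𝕜] [ProperSpace 𝕜] [NormedRing A] [NormedAlgebra 𝕜 A]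
    [hA : CompleteSpace A] {a : X → A} {x₀ : X} (ha : ContinuousAt a x₀) {K : Set 𝕜}
    (hK : IsClosed K) (h : Disjoint (spectrum 𝕜 (a x₀)) K) :
    ∀ᶠ x in 𝓝 x₀, Disjoint (spectrum 𝕜 (a x)) K := by
  set R := (‖a x₀‖ + 1) * ‖(1 : A)‖
  have hnorm : ∀ᶠ x in 𝓝 x₀, ‖a x‖ < ‖a x₀‖ + 1 :=
    ha.norm.eventually (gt_mem_nhds (lt_add_one _))
  have hres :
      ∀ᶠ x in 𝓝 x₀, ∀ μ ∈ K ∩ Metric.closedBall 0 R, μ ∈ resolventSet 𝕜 (a x) := by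
    refine ((isCompact_closedBall 0 R).inter_left hK).eventually_forall_of_forall_eventually
      fun μ hμ => ?_
    have hcont : ContinuousAt (fun z : X × 𝕜 => algebraMap 𝕜 A z.2 - a z.1) (x₀, μ) :=
      (continuous_algebraMap 𝕜 A).continuousAt.comp continuousAt_snd |>.sub
        (ha.comp continuousAt_fst)
    exact hcont.eventually_mem
      (Units.isOpen.mem_nhds (not_not.mp (Set.disjoint_right.mp h hμ.1)))
  filter_upwards [hnorm, hres] with x hx hxres
  refine Set.disjoint_left.mpr fun μ hμ hμK => hμ (hxres μ ⟨hμK, ?_⟩)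
  rw [mem_closedBall_zero_iff]
  exact (spectrum.norm_le_norm_mul_of_mem hμ).trans
    (mul_le_mul_of_nonneg_right hx.le (norm_nonneg _))

namespace Matrix

variable {X 𝕜 n : Type*} [Fintype n] [DecidableEq n]

theorem eventually_disjoint_spectrum_of_continuousAt [TopologicalSpace X]
    [NontriviallyNormedField 𝕜] [ProperSpace 𝕜] {M : X → Matrix n n 𝕜} {x₀ : X}
    (hM : ContinuousAt M x₀) {K : Set 𝕜} (hK : IsClosed K)
    (h : Disjoint (spectrum 𝕜 (M x₀)) K) :
    ∀ᶠ x in 𝓝 x₀, Disjoint (spectrum 𝕜 (M x)) K := by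
  let := Matrix.linftyOpNormedRing (n := n) (α := 𝕜)
  let := Matrix.linftyOpNormedAlgebra (n := n) (α := 𝕜) (R := 𝕜)
  -- the `linftyOp` uniformity is not reducibly the product one, so no instance is found
  exact spectrum.eventually_disjoint_of_continuousAt (hA := FiniteDimensional.complete 𝕜 _)
    hM hK h

theorem det_sub_smul_one_ne_zero_iff [Field 𝕜] (M : Matrix n n 𝕜) (μ : 𝕜) :
    (M - μ • (1 : Matrix n n 𝕜)).det ≠ 0 ↔ μ ∉ spectrum 𝕜 M := by
  rw [spectrum.mem_iff, not_not, isUnit_iff_isUnit_det, isUnit_iff_ne_zero,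
    Algebra.algebraMap_eq_smul_one, ← neg_sub, det_neg]
  simp

end Matrix

theorem lt_sq_floor_sqrt_sSup_pos_add_one {S : Set ℝ} (hS : BddAbove S) {ν : ℝ} (hν : ν ∈ S)
    (hν_pos : 0 < ν) : ν < ((⌊√(sSup {x ∈ S | 0 < x})⌋₊ : ℝ) + 1) ^ 2 := by
  set s := sSup {x ∈ S | 0 < x}
  have hνs : ν ≤ s := le_csSup (hS.mono (Set.sep_subset _ _)) ⟨hν, hν_pos⟩
  exact Real.lt_sq_of_sqrt_lt ((Real.sqrt_le_sqrt hνs).trans_lt (Nat.lt_floor_add_one √s))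

theorem detecting_functions_nonzero_above_N_general (n k : ℕ)
    (A B : (Fin k → ℝ) → Matrix (Fin n) (Fin n) ℝ)
    (hAcont : ∀ i j : Fin n, Continuous fun lam => A lam i j)
    (hBcont : ∀ i j : Fin n, Continuous fun lam => B lam i j)
    (lam0 : Fin k → ℝ) (N : ℕ)
    (hN : N = ⌊Real.sqrt (sSup {ν : ℝ | ν ∈ spectrum ℝ (A lam0 * B lam0) ∧ 0 < ν})⌋₊) :
    ∃ U : Set (Fin k → ℝ), IsOpen U ∧ lam0 ∈ U ∧
      ∀ j : ℕ, N < j → ∀ lam ∈ U,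
        (A lam * B lam - ((j : ℝ) ^ 2) • (1 : Matrix (Fin n) (Fin n) ℝ)).det ≠ 0 := by
  have hcont : Continuous fun lam => A lam * B lam :=
    (continuous_matrix hAcont).matrix_mul (continuous_matrix hBcont)
  have hdisj₀ : Disjoint (spectrum ℝ (A lam0 * B lam0)) (Set.Ici (((N : ℝ) + 1) ^ 2)) := by
    refine Set.disjoint_left.mpr fun ν hν hνN => ?_
    have hν_pos : 0 < ν := lt_of_lt_of_le (by positivity) hνN
    have hν_lt := lt_sq_floor_sqrt_sSup_pos_add_one
      (A lam0 * B lam0).finite_real_spectrum.bddAbove hν hν_pos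
    exact (hN ▸ hν_lt).not_ge hνN
  obtain ⟨U, hU, hUopen, hlam0⟩ := mem_nhds_iff.mp
    (eventually_disjoint_spectrum_of_continuousAt hcont.continuousAt isClosed_Ici hdisj₀)
  refine ⟨U, hUopen, hlam0, fun j hj lam hlam => ?_⟩
  rw [det_sub_smul_one_ne_zero_iff]
  refine Set.disjoint_right.mp (hU hlam) (Set.mem_Ici.mpr ?_)
  gcongr
  exact_mod_cast hj

/-- If `∇ₓ²H(x₀,λ) = diag(A(λ),B(λ))` with `A, B` continuous and symmetric, and
`N(λ₀) = ⌊max{√ν : ν positive eigenvalue of A(λ₀)B(λ₀)}⌋`, then on some open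
neighbourhood `U` of `λ₀` we have `det(A(λ)B(λ) - j²I) ≠ 0` for all `j > N(λ₀)`. -/
theorem detecting_functions_nonzero_above_N (n k : ℕ)
    (A B : (Fin k → ℝ) → Matrix (Fin n) (Fin n) ℝ)
    (hAcont : ∀ i j : Fin n, Continuous fun lam => A lam i j)
    (hBcont : ∀ i j : Fin n, Continuous fun lam => B lam i j)
    (hAsymm : ∀ lam, (A lam).IsSymm) (hBsymm : ∀ lam, (B lam).IsSymm)
    (lam0 : Fin k → ℝ) (N : ℕ)
    (hN : N = ⌊Real.sqrt (sSup {ν : ℝ | ν ∈ spectrum ℝ (A lam0 * B lam0) ∧ 0 < ν})⌋₊) :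
    ∃ U : Set (Fin k → ℝ), IsOpen U ∧ lam0 ∈ U ∧
      ∀ j : ℕ, N < j → ∀ lam ∈ U,
        (A lam * B lam - ((j : ℝ) ^ 2) • (1 : Matrix (Fin n) (Fin n) ℝ)).det ≠ 0 :=
  detecting_functions_nonzero_above_N_general n k A B hAcont hBcont lam0 N hN
end

section
/- Let $H \in C^2(\mathbb{R}^{2n},\mathbb{R})$ and let $x_0$ be a stationary point ($\nabla H(x_0) = 0$) that is completely degenerate, i.e., $\nabla^2 H(x_0) = 0$. Suppose $(x_m)$ is a sequence of nonconstant periodic solutions of $\dot{x} = J\nabla H(x)$ with minimal periods $T_m$, such that $\sup_t |x_m(t) - x_0| < 1/m$ for each $m$. Then $T_m \to \infty$. Equivalently: for every $C > 0$ there is $\delta > 0$ such that every nonstationary periodic orbit contained in the ball $B(x_0,\delta)$ has minimal period greater than $C$. -/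
/-!
Yorke's estimate: if a vector field `f` is `K`-Lipschitz along a nonconstant `P`-periodic
solution of `ẋ = f x`, then `K P ≥ 1`. Indeed the velocity `v = f ∘ x` has zero mean over a
period, so if `‖v‖` attains its maximum `V > 0` at `t₀`, then
`P V = ‖∫ (v t₀ - v t)‖ ≤ K ∫ ‖x t₀ - x t‖ ≤ K V P²`.
At a completely degenerate stationary point the field `J ∇H` has vanishing derivative, so it is
`K`-Lipschitz on small balls for every `K > 0`; periodic orbits inside those balls must therefore
have periods at least `1 / K`.
-/

open Matrix Filter

open Function Metric Set
open scoped NNReal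

theorem ContDiff.gradient {F : Type*} [NormedAddCommGroup F] [InnerProductSpace ℝ F]
    [CompleteSpace F] {f : F → ℝ} {m n : WithTop ℕ∞} (hf : ContDiff ℝ n f) (hmn : m + 1 ≤ n) :
    ContDiff ℝ m (gradient f) :=
  (InnerProductSpace.toDual ℝ F).symm.contDiff.comp (hf.fderiv_right hmn)

theorem exists_ball_lipschitzOnWith_of_fderiv_eq_zero {𝕜 E F : Type*} [RCLike 𝕜]
    [NormedAddCommGroup E] [NormedSpace 𝕜 E] [NormedAddCommGroup F] [NormedSpace 𝕜 F]
    {f : E → F} {x₀ : E} (hf : ContDiffAt 𝕜 1 f x₀) (hf₀ : fderiv 𝕜 f x₀ = 0) {K : ℝ≥0}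
    (hK : 0 < K) : ∃ δ > 0, LipschitzOnWith K f (ball x₀ δ) := by
  obtain ⟨U, hU, hlip⟩ := hf.exists_lipschitzOnWith_of_nnnorm_lt K (by simpa [hf₀] using hK)
  obtain ⟨δ, hδ, hball⟩ := Metric.mem_nhds_iff.mp hU
  exact ⟨δ, hδ, hlip.mono hball⟩

section PeriodLowerBound

variable {E : Type*} [NormedAddCommGroup E] [NormedSpace ℝ E] [CompleteSpace E]
  {f : E → E} {s : Set E} {K : ℝ≥0} {x : ℝ → E} {P : ℝ}

theorem LipschitzOnWith.one_le_mul_period (hf : LipschitzOnWith K f s)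
    (hx : ∀ t, HasDerivAt x (f (x t)) t) (hs : ∀ t, x t ∈ s) (hper : Periodic x P)
    (hP : 0 < P) (hnc : ∃ a b, x a ≠ x b) : 1 ≤ K * P := by
  set v : ℝ → E := fun t => f (x t)
  have hxc : Continuous x := continuous_iff_continuousAt.mpr fun t => (hx t).continuousAt
  have hvlip : ∀ a b, ‖v a - v b‖ ≤ K * ‖x a - x b‖ := fun a b =>
    lipschitzOnWith_iff_norm_sub_le.mp hf (hs a) (hs b)
  have hvc : Continuous v := hf.continuousOn.comp_continuous hxc hs
  have hvper : Periodic v P := fun t => by simp only [v, hper t]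
  obtain ⟨_, ⟨t₀, rfl⟩, hmax⟩ := (hvper.compact_of_continuous hP.ne' hvc).exists_isMaxOn
    (range_nonempty v) continuous_norm.continuousOn
  set V := ‖v t₀‖
  have hV : ∀ t, ‖v t‖ ≤ V := fun t => hmax (mem_range_self t)
  have hxlip : ∀ a b, ‖x a - x b‖ ≤ V * |a - b| := fun a b => by
    simpa [Real.norm_eq_abs] using convex_univ.norm_image_sub_le_of_norm_hasDerivWithin_le
      (fun t _ => (hx t).hasDerivWithinAt) (fun t _ => hV t) (mem_univ b) (mem_univ a)
  have hVpos : 0 < V := by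
    obtain ⟨a, b, hab⟩ := hnc
    by_contra! hV0
    have : ‖x a - x b‖ ≤ 0 :=
      (hxlip a b).trans (mul_nonpos_of_nonpos_of_nonneg hV0 (abs_nonneg _))
    exact hab (sub_eq_zero.mp (norm_le_zero_iff.mp this))
  have hmean : ∫ t in t₀..t₀ + P, (v t₀ - v t) = P • v t₀ := by
    rw [intervalIntegral.integral_sub intervalIntegrable_const (hvc.intervalIntegrable _ _),
      intervalIntegral.integral_eq_sub_of_hasDerivAt (fun t _ => hx t)
        (hvc.intervalIntegrable _ _), hper t₀, intervalIntegral.integral_const]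
    simp
  have hdev : ‖∫ t in t₀..t₀ + P, (v t₀ - v t)‖ ≤ K * (V * P) * |t₀ + P - t₀| := by
    refine intervalIntegral.norm_integral_le_of_norm_le_const fun t ht => ?_
    rw [uIoc_of_le (by linarith)] at ht
    calc ‖v t₀ - v t‖ ≤ K * ‖x t₀ - x t‖ := hvlip t₀ t
      _ ≤ K * (V * |t₀ - t|) := by gcongr; exact hxlip t₀ t
      _ ≤ K * (V * P) := by gcongr; rw [abs_le]; constructor <;> linarith [ht.1, ht.2]
  rw [hmean, norm_smul, Real.norm_of_nonneg hP.le, add_sub_cancel_left, abs_of_pos hP] at hdev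
  exact le_of_mul_le_mul_left (by linarith) (mul_pos hP hVpos)

end PeriodLowerBound

theorem tendsto_period_atTop_of_fderiv_eq_zero {E : Type*} [NormedAddCommGroup E]
    [NormedSpace ℝ E] [CompleteSpace E] {f : E → E} {x₀ : E}
    (hf : ContDiffAt ℝ 1 f x₀) (hf₀ : fderiv ℝ f x₀ = 0) (x : ℕ → ℝ → E) (T : ℕ → ℝ)
    (hsol : ∀ m t, HasDerivAt (x m) (f (x m t)) t) (hnc : ∀ m, ∃ a b, x m a ≠ x m b)
    (hTpos : ∀ m, 0 < T m) (hTper : ∀ m, Periodic (x m) (T m))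
    (hshrink : ∀ δ > 0, ∀ᶠ m in atTop, ∀ t, x m t ∈ ball x₀ δ) :
    Tendsto T atTop atTop := by
  refine Filter.tendsto_atTop.mpr fun C => ?_
  have hK : (0 : ℝ) < (max C 1)⁻¹ := by positivity
  obtain ⟨δ, hδ, hlip⟩ :=
    exists_ball_lipschitzOnWith_of_fderiv_eq_zero hf hf₀ (K := ⟨_, hK.le⟩) hK
  filter_upwards [hshrink δ hδ] with m hm
  have hKT : 1 ≤ (max C 1)⁻¹ * T m := hlip.one_le_mul_period (hsol m) hm (hTper m) (hTpos m) (hnc m)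
  rw [inv_mul_eq_div, one_le_div (by positivity)] at hKT
  exact (le_max_left C 1).trans hKT

theorem minimal_periods_tendsto_infty_of_completely_degenerate_general (n : ℕ)
    (H : EuclideanSpace ℝ (Fin n ⊕ Fin n) → ℝ) (hH : ContDiff ℝ 2 H)
    (J : Matrix (Fin n ⊕ Fin n) (Fin n ⊕ Fin n) ℝ)
    (x0 : EuclideanSpace ℝ (Fin n ⊕ Fin n))
    (hhess : fderiv ℝ (fun y => gradient H y) x0 = 0)
    (x : ℕ → ℝ → EuclideanSpace ℝ (Fin n ⊕ Fin n)) (T : ℕ → ℝ)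
    (hsol : ∀ m, ∀ t : ℝ, HasDerivAt (x m) (Matrix.toEuclideanLin J (gradient H (x m t))) t)
    (hnonconst : ∀ m, ∃ t s : ℝ, x m t ≠ x m s)
    (hTpos : ∀ m, 0 < T m)
    (hTper : ∀ m, Function.Periodic (x m) (T m))
    (hclose : ∀ m : ℕ, ∀ t : ℝ, ‖x m t - x0‖ < 1 / (m + 1)) :
    Tendsto T atTop atTop := by
  set A := LinearMap.toContinuousLinearMap (Matrix.toEuclideanLin J)
  have hgrad : ContDiff ℝ 1 (gradient H) := hH.gradient (by norm_num)
  have hF₀ : fderiv ℝ (A ∘ gradient H) x0 = 0 := by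
    rw [(A.hasFDerivAt.comp x0 (hgrad.differentiable one_ne_zero x0).hasFDerivAt).fderiv,
      show fderiv ℝ (gradient H) x0 = 0 from hhess, ContinuousLinearMap.comp_zero]
  refine tendsto_period_atTop_of_fderiv_eq_zero (A.contDiff.comp hgrad).contDiffAt hF₀ x T hsol
    hnonconst hTpos hTper fun δ hδ => ?_
  obtain ⟨N, hN⟩ := exists_nat_one_div_lt hδ
  filter_upwards [eventually_ge_atTop N] with m hm t
  rw [mem_ball, dist_eq_norm]
  exact (hclose m t).trans_le (Nat.one_div_le_one_div hm) |>.trans hN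

/-- If `x₀` is a completely degenerate stationary point of a `C²` Hamiltonian system
(`∇H(x₀)=0`, `∇²H(x₀)=0`) and `(x_m)` is a sequence of nonconstant periodic solutions
of `ẋ = J∇H(x)` with minimal periods `T_m` such that `sup_t ‖x_m(t)-x₀‖ < 1/m`, then
`T_m → ∞`. -/
theorem minimal_periods_tendsto_infty_of_completely_degenerate (n : ℕ)
    (H : EuclideanSpace ℝ (Fin n ⊕ Fin n) → ℝ) (hH : ContDiff ℝ 2 H)
    (J : Matrix (Fin n ⊕ Fin n) (Fin n ⊕ Fin n) ℝ)
    (hJ : J = Matrix.fromBlocks 0 (-1) 1 0)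
    (x0 : EuclideanSpace ℝ (Fin n ⊕ Fin n))
    (hgrad : gradient H x0 = 0)
    (hhess : fderiv ℝ (fun y => gradient H y) x0 = 0)
    (x : ℕ → ℝ → EuclideanSpace ℝ (Fin n ⊕ Fin n)) (T : ℕ → ℝ)
    (hsol : ∀ m, ∀ t : ℝ, HasDerivAt (x m) (Matrix.toEuclideanLin J (gradient H (x m t))) t)
    (hnonconst : ∀ m, ∃ t s : ℝ, x m t ≠ x m s)
    (hTpos : ∀ m, 0 < T m)
    (hTper : ∀ m, Function.Periodic (x m) (T m))
    (hTmin : ∀ m, ∀ s : ℝ, 0 < s → Function.Periodic (x m) s → T m ≤ s)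
    (hclose : ∀ m : ℕ, ∀ t : ℝ, ‖x m t - x0‖ < 1 / (m + 1)) :
    Tendsto T atTop atTop :=
  minimal_periods_tendsto_infty_of_completely_degenerate_general n H hH J x0 hhess x T hsol
    hnonconst hTpos hTper hclose
end
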